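/- Let G ≅ Z_{ℓ1} × ⋯ × Z_{ℓr} be a finite abelian group with exponent ℓ*, and let I be a finite non-periodic multiset with elements from G such that gcd(|I|, ℓ*) = 1. Let t ∈ (Z/ℓ*Z)^× be a multiplier of I. Then there are exactly ∏_{i=1}^r gcd(t−1, ℓ_i) distinct z ∈ G with t(I+z) = I+z; moreover z = −|I|^{φ(ℓ*)−1}·σ, where σ = Σ_{i∈I} i, is such a solution independent of t. In particular there exists z ∈ G such that I + z is fixed by the entire multiplier group H of I. -/

import Mathlib

/-- The multiplicity function of the translated multiset `I + g`:
`m_{I+g}(i) = m_I(i - g)`. -/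
def translateM {G : Type*} [AddGroup G] (m : G → ℕ) (g : G) : G → ℕ :=
  fun i => m (i - g)

/-- The multiplicity function of the dilated multiset `t·I = {(t·i)^{m(i)} : i ∈ I}`:
`m_{tI}(x) = ∑_{j : t • j = x} m_I(j)`. -/
def dilateM {G : Type*} [AddGroup G] [Fintype G] [DecidableEq G] (t : ℕ) (m : G → ℕ) :
    G → ℕ :=
  fun x => ∑ j ∈ Finset.univ.filter (fun j : G => t • j = x), m j

lemma card_mulker_zmod (ℓ : ℕ) [NeZero ℓ] (a : ℕ) :
    Nat.card {x : ZMod ℓ // (a : ZMod ℓ) * x = 0} = Nat.gcd a ℓ := by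
  set f : ZMod ℓ →+ ZMod ℓ := AddMonoidHom.mulLeft (a : ZMod ℓ) with hf
  have hfa : ∀ x, f x = (a : ZMod ℓ) * x := fun x => rfl
  have hrange : f.range = AddSubgroup.zmultiples (a : ZMod ℓ) := by
    ext y
    simp only [AddMonoidHom.mem_range, AddSubgroup.mem_zmultiples_iff, hfa]
    constructor
    · rintro ⟨x, rfl⟩
      refine ⟨(x.val : ℤ), ?_⟩
      push_cast [zsmul_eq_mul, ZMod.natCast_val, ZMod.cast_id]
      ring
    · rintro ⟨k, rfl⟩
      exact ⟨(k : ZMod ℓ), by rw [zsmul_eq_mul, mul_comm]⟩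
  have h1 := AddSubgroup.card_eq_card_quotient_mul_card_addSubgroup f.ker
  have h2 : Nat.card (ZMod ℓ ⧸ f.ker) = Nat.card f.range :=
    Nat.card_congr (QuotientAddGroup.quotientKerEquivRange f).toEquiv
  have h3 : Nat.card f.range = ℓ / Nat.gcd ℓ a := by
    rw [hrange, Nat.card_zmultiples, ZMod.addOrderOf_coe a (NeZero.ne ℓ)]
  have hdvd : Nat.gcd ℓ a ∣ ℓ := Nat.gcd_dvd_left ℓ a
  have hker : Nat.card f.ker = Nat.gcd ℓ a := by
    rw [Nat.card_zmod, h2, h3] at h1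
    have hg0 : Nat.gcd ℓ a ≠ 0 := fun h => NeZero.ne ℓ (Nat.eq_zero_of_gcd_eq_zero_left h)
    have hl0 : ℓ ≠ 0 := NeZero.ne ℓ
    have hle : Nat.gcd ℓ a ≤ ℓ := Nat.le_of_dvd (Nat.pos_of_ne_zero hl0) hdvd
    have hq0 : ℓ / Nat.gcd ℓ a ≠ 0 := by
      have := (Nat.div_ne_zero_iff).mpr ⟨hg0, hle⟩
      exact this
    have hdm := Nat.div_mul_cancel hdvd
    exact Nat.eq_of_mul_eq_mul_left (Nat.pos_of_ne_zero hq0) (by omega)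
  have : Nat.card {x : ZMod ℓ // (a : ZMod ℓ) * x = 0} = Nat.card f.ker :=
    Nat.card_congr (Equiv.subtypeEquivRight fun x => by
      simp only [AddMonoidHom.mem_ker, hfa])
  rw [this, hker, Nat.gcd_comm]

lemma card_zsmulker_zmod (ℓ : ℕ) [NeZero ℓ] (d : ℤ) :
    Nat.card {x : ZMod ℓ // d • x = 0} = Int.gcd d ℓ := by
  have key : ∀ x : ZMod ℓ, (d • x = 0) ↔ ((d.natAbs : ZMod ℓ) * x = 0) := by
    intro x
    rw [zsmul_eq_mul]
    rcases Int.natAbs_eq d with h | h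
    · nth_rw 1 [h]; rw [Int.cast_natCast]
    · nth_rw 1 [h]; rw [Int.cast_neg, Int.cast_natCast, neg_mul, neg_eq_zero]
  rw [show Int.gcd d ℓ = Nat.gcd d.natAbs ℓ by simp [Int.gcd]]
  rw [← card_mulker_zmod ℓ d.natAbs]
  exact Nat.card_congr (Equiv.subtypeEquivRight key)

set_option linter.unusedSectionVars false

section Aux
variable {G : Type*} [AddCommGroup G] [Fintype G] [DecidableEq G]

lemma translateM_comp (m : G → ℕ) (a b : G) :
    translateM (translateM m a) b = translateM m (a + b) := by
  funext i; simp [translateM, sub_sub, add_comm a b]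

lemma translateM_zero' (m : G → ℕ) : translateM m 0 = m := by
  funext i; simp [translateM]

lemma translateM_inj (m : G → ℕ) (hnp : ∀ g : G, translateM m g = m → g = 0)
    {a b : G} (h : translateM m a = translateM m b) : a = b := by
  have h2 : translateM m (a + -b) = translateM m (b + -b) := by
    rw [← translateM_comp, ← translateM_comp, h]
  rw [add_neg_cancel, translateM_zero'] at h2
  have h3 := hnp _ h2
  have : a - b = 0 := by rwa [sub_eq_add_neg]
  exact sub_eq_zero.mp this

lemma smul_eq_self_of_modeq {k : ℕ} (h : k ≡ 1 [MOD AddMonoid.exponent G]) (x : G) :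
    k • x = x := by
  obtain ⟨c, hc⟩ := Nat.modEq_iff_dvd.mp h.symm
  have h0 : ((AddMonoid.exponent G : ℕ) : ℤ) • x = 0 := by
    rw [natCast_zsmul]; exact AddMonoid.exponent_nsmul_eq_zero x
  have hz : (k : ℤ) • x - x = 0 := by
    have : (k : ℤ) • x - (1 : ℤ) • x = ((k : ℤ) - 1) • x := (sub_smul _ _ _).symm
    rw [one_smul] at this
    rw [this, show ((k:ℤ) - 1) = (AddMonoid.exponent G : ℤ) * c from hc, mul_comm, mul_smul,
      h0, smul_zero]
  have := sub_eq_zero.mp hz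
  rwa [natCast_zsmul] at this

lemma dilateM_eq (t t' : ℕ) (h1 : ∀ x : G, t' • t • x = x) (h2 : ∀ x : G, t • t' • x = x)
    (m : G → ℕ) (x : G) : dilateM t m x = m (t' • x) := by
  unfold dilateM
  have hset : Finset.univ.filter (fun j : G => t • j = x) = {t' • x} := by
    ext j
    simp only [Finset.mem_filter, Finset.mem_univ, true_and, Finset.mem_singleton]
    constructor
    · rintro rfl; exact (h1 j).symm
    · rintro rfl; exact h2 x
  rw [hset, Finset.sum_singleton]

lemma sigma_dilate (t t' : ℕ) (h1 : ∀ x : G, t' • t • x = x) (h2 : ∀ x : G, t • t' • x = x)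
    (m : G → ℕ) :
    ∑ x : G, dilateM t m x • x = t • ∑ x : G, m x • x := by
  calc ∑ x : G, dilateM t m x • x = ∑ x : G, m (t' • x) • x := by
        simp only [dilateM_eq t t' h1 h2]
    _ = ∑ y : G, m (t' • t • y) • (t • y) :=
        (Equiv.sum_comp (⟨fun x => t • x, fun x => t' • x, h1, h2⟩ : G ≃ G)
          (fun x => m (t' • x) • x)).symm
    _ = ∑ y : G, m y • (t • y) := by simp only [h1]
    _ = ∑ y : G, t • (m y • y) := Finset.sum_congr rfl fun y _ => smul_comm _ _ _
    _ = t • ∑ y : G, m y • y := (Finset.smul_sum).symm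

lemma sigma_translate (m : G → ℕ) (g : G) :
    ∑ x : G, translateM m g x • x = (∑ x : G, m x • x) + (∑ x : G, m x) • g := by
  calc ∑ x : G, translateM m g x • x
      = ∑ y : G, translateM m g (y + g) • (y + g) :=
        (Equiv.sum_comp (Equiv.addRight g) (fun x => translateM m g x • x)).symm
    _ = ∑ y : G, m y • (y + g) := by simp [translateM]
    _ = ∑ y : G, (m y • y + m y • g) := by simp [smul_add]
    _ = (∑ y : G, m y • y) + ∑ y : G, m y • g := Finset.sum_add_distrib
    _ = (∑ y : G, m y • y) + (∑ y : G, m y) • g := by rw [← Finset.sum_smul]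

lemma mult_rel (s s' : ℕ) (h1 : ∀ x : G, s' • s • x = x) (h2 : ∀ x : G, s • s' • x = x)
    (m : G → ℕ) (g : G) (hg : dilateM s m = translateM m g) :
    ((s : ℤ) - 1) • (∑ x : G, m x • x) = ((∑ x : G, m x : ℕ) : ℤ) • g := by
  have h : ∑ x : G, dilateM s m x • x = ∑ x : G, translateM m g x • x := by rw [hg]
  rw [sigma_dilate s s' h1 h2, sigma_translate] at h
  calc ((s : ℤ) - 1) • (∑ x : G, m x • x)
      = (s : ℤ) • (∑ x : G, m x • x) - (∑ x : G, m x • x) := by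
        rw [sub_smul, one_smul]
    _ = s • (∑ x : G, m x • x) - (∑ x : G, m x • x) := by rw [natCast_zsmul]
    _ = ((∑ x : G, m x • x) + (∑ x : G, m x) • g) - (∑ x : G, m x • x) := by rw [h]
    _ = (∑ x : G, m x) • g := by abel
    _ = ((∑ x : G, m x : ℕ) : ℤ) • g := (natCast_zsmul _ _).symm

lemma fixed_iff (s s' : ℕ) (h1 : ∀ x : G, s' • s • x = x) (h2 : ∀ x : G, s • s' • x = x)
    (m : G → ℕ) (hnp : ∀ g : G, translateM m g = m → g = 0)
    (g : G) (hg : dilateM s m = translateM m g) (z : G) :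
    (dilateM s (translateM m z) = translateM m z) ↔ ((s : ℤ) - 1) • z = -g := by
  have key : dilateM s (translateM m z) = translateM m (g + s • z) := by
    funext x
    rw [dilateM_eq s s' h1 h2]
    show m (s' • x - z) = m (x - (g + s • z))
    have hx : s' • x - z = s' • (x - s • z) := by
      rw [nsmul_sub, h1]
    rw [hx, show m (s' • (x - s • z)) = dilateM s m (x - s • z) from
        (dilateM_eq s s' h1 h2 m _).symm, hg]
    show m (x - s • z - g) = m (x - (g + s • z))
    congr 1
    abel
  rw [key]
  constructor
  · intro h
    have hz := translateM_inj m hnp h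
    have : (s : ℤ) • z - z = -g := by
      rw [natCast_zsmul]
      nth_rw 2 [← hz]
      abel
    rw [sub_smul, one_smul]; exact this
  · intro h
    have hsz : (s : ℤ) • z - z = -g := by rw [← h, sub_smul, one_smul]
    rw [natCast_zsmul] at hsz
    have hg2 : z - s • z = g := by rw [← neg_sub, hsz, neg_neg]
    have hz : g + s • z = z := by rw [← hg2]; abel
    rw [hz]

end Aux

section Aux2
variable {G : Type*} [AddCommGroup G] [Fintype G] [DecidableEq G]

lemma z0_rel (s : ℕ) (g : G) (n : ℕ) (σ : G) (hco : Nat.Coprime n (AddMonoid.exponent G))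
    (hrel : ((s : ℤ) - 1) • σ = (n : ℤ) • g) :
    ((s : ℤ) - 1) • (-(n ^ (Nat.totient (AddMonoid.exponent G) - 1) • σ)) = -g := by
  set e := AddMonoid.exponent G with he
  have epos : 0 < e := Nat.pos_of_ne_zero AddMonoid.exponent_ne_zero_of_finite
  have totpos : 0 < e.totient := Nat.totient_pos.mpr epos
  set N := n ^ (e.totient - 1) with hN
  have hNn : N * n = n ^ e.totient := by
    rw [hN, ← pow_succ, Nat.sub_add_cancel totpos]
  have key : ((s : ℤ) - 1) • (N • σ) = g := by
    calc ((s : ℤ) - 1) • (N • σ) = ((s : ℤ) - 1) • ((N : ℤ) • σ) := by rw [natCast_zsmul]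
      _ = ((N : ℤ)) • (((s : ℤ) - 1) • σ) := by rw [smul_smul, smul_smul, mul_comm]
      _ = (N : ℤ) • ((n : ℤ) • g) := by rw [hrel]
      _ = ((N : ℤ) * (n : ℤ)) • g := smul_smul _ _ _
      _ = ((N * n : ℕ) : ℤ) • g := by norm_cast
      _ = (N * n) • g := natCast_zsmul _ _
      _ = n ^ e.totient • g := by rw [hNn]
      _ = g := smul_eq_self_of_modeq (Nat.ModEq.pow_totient hco) g
  rw [smul_neg, key]

end Aux2


/-- For a non-periodic multiset `I` on `G ≅ ℤ_{ℓ₁} × ⋯ × ℤ_{ℓᵣ}` with `gcd(|I|, ℓ*) = 1`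
and a multiplier `t`: there are exactly `∏ᵢ gcd(t−1, ℓᵢ)` elements `z ∈ G` with
`t(I+z) = I+z`; moreover `z = −|I|^{φ(ℓ*)−1}·σ` is such a solution, independent of `t`,
so some translate of `I` is fixed by the whole multiplier group. -/
theorem stmt12 {G : Type*} [AddCommGroup G] [Fintype G] [DecidableEq G]
    (r : ℕ) (ℓ : Fin r → ℕ) [∀ i, NeZero (ℓ i)] (Φ : G ≃+ ∀ i, ZMod (ℓ i))
    (m : G → ℕ) (hnp : ∀ g : G, translateM m g = m → g = 0)
    (hco : Nat.Coprime (∑ i, m i) (AddMonoid.exponent G))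
    (t : ℕ) (ht : Nat.Coprime t (AddMonoid.exponent G))
    (hmul : ∃ g : G, dilateM t m = translateM m g) :
    {z : G | dilateM t (translateM m z) = translateM m z}.ncard
        = ∏ i, Int.gcd ((t : ℤ) - 1) (ℓ i : ℤ) ∧
      dilateM t (translateM m
          (-((∑ i, m i) ^ (Nat.totient (AddMonoid.exponent G) - 1) • (∑ i : G, m i • i))))
        = translateM m
          (-((∑ i, m i) ^ (Nat.totient (AddMonoid.exponent G) - 1) • (∑ i : G, m i • i))) ∧
      ∀ (s : ℕ), Nat.Coprime s (AddMonoid.exponent G) →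
        (∃ g : G, dilateM s m = translateM m g) →
          dilateM s (translateM m
              (-((∑ i, m i) ^ (Nat.totient (AddMonoid.exponent G) - 1) • (∑ i : G, m i • i))))
            = translateM m
              (-((∑ i, m i) ^ (Nat.totient (AddMonoid.exponent G) - 1) •
                  (∑ i : G, m i • i))) := by
  classical
  have epos : 0 < AddMonoid.exponent G :=
    Nat.pos_of_ne_zero AddMonoid.exponent_ne_zero_of_finite
  have tot1 : Nat.totient (AddMonoid.exponent G) - 1 + 1 = Nat.totient (AddMonoid.exponent G) :=
    Nat.sub_add_cancel (Nat.totient_pos.mpr epos)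
  have inv : ∀ s : ℕ, Nat.Coprime s (AddMonoid.exponent G) →
      ∃ s' : ℕ, (∀ x : G, s' • s • x = x) ∧ (∀ x : G, s • s' • x = x) := by
    intro s hs
    refine ⟨s ^ (Nat.totient (AddMonoid.exponent G) - 1), fun x => ?_, fun x => ?_⟩
    · rw [smul_smul, ← pow_succ, tot1]
      exact smul_eq_self_of_modeq (Nat.ModEq.pow_totient hs) x
    · rw [smul_smul, ← pow_succ', tot1]
      exact smul_eq_self_of_modeq (Nat.ModEq.pow_totient hs) x
  set z₀ : G :=
    -((∑ i, m i) ^ (Nat.totient (AddMonoid.exponent G) - 1) • (∑ i : G, m i • i)) with hz₀def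
  have main : ∀ s : ℕ, Nat.Coprime s (AddMonoid.exponent G) → ∀ g : G,
      dilateM s m = translateM m g →
      ((s : ℤ) - 1) • z₀ = -g ∧ dilateM s (translateM m z₀) = translateM m z₀ := by
    intro s hs g hg
    obtain ⟨s', h1, h2⟩ := inv s hs
    have hrel := mult_rel s s' h1 h2 m g hg
    have hz := z0_rel s g (∑ i, m i) (∑ i : G, m i • i) hco hrel
    rw [← hz₀def] at hz
    exact ⟨hz, (fixed_iff s s' h1 h2 m hnp g hg z₀).mpr hz⟩
  obtain ⟨g, hg⟩ := hmul
  refine ⟨?_, (main t ht g hg).2, fun s hs hsm => ?_⟩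
  swap
  · obtain ⟨gs, hgs⟩ := hsm
    exact (main s hs gs hgs).2
  obtain ⟨t', ht1, ht2⟩ := inv t ht
  have hz0 := (main t ht g hg).1
  have hset : {z : G | dilateM t (translateM m z) = translateM m z}
      = {z : G | ((t : ℤ) - 1) • z = -g} := by
    ext z
    exact fixed_iff t t' ht1 ht2 m hnp g hg z
  rw [hset, ← Nat.card_coe_set_eq]
  have E1 : {z : G // ((t : ℤ) - 1) • z = -g} ≃ {x : G // ((t : ℤ) - 1) • x = 0} :=
    { toFun := fun z => ⟨z.1 - z₀, by rw [smul_sub, z.2, hz0, sub_self]⟩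
      invFun := fun x => ⟨z₀ + x.1, by rw [smul_add, hz0, x.2, add_zero]⟩
      left_inv := fun z => Subtype.ext (by simp)
      right_inv := fun x => Subtype.ext (by simp) }
  have E2 : {x : G // ((t : ℤ) - 1) • x = 0} ≃
      {v : ∀ i, ZMod (ℓ i) // ((t : ℤ) - 1) • v = 0} :=
    Equiv.subtypeEquiv Φ.toEquiv (fun x => by
      constructor
      · intro h
        show ((t : ℤ) - 1) • Φ x = 0
        rw [← map_zsmul Φ, h, map_zero]
      · intro h
        have h2 : Φ (((t : ℤ) - 1) • x) = 0 := by rw [map_zsmul]; exact h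
        exact (map_eq_zero_iff Φ Φ.injective).mp h2)
  have E3 : {v : ∀ i, ZMod (ℓ i) // ((t : ℤ) - 1) • v = 0} ≃
      {v : ∀ i, ZMod (ℓ i) // ∀ i, ((t : ℤ) - 1) • v i = 0} :=
    Equiv.subtypeEquivRight (fun v => by simp [funext_iff])
  have E4 := @Equiv.subtypePiEquivPi (Fin r) (fun i => ZMod (ℓ i))
      (fun i x => ((t : ℤ) - 1) • x = 0)
  show Nat.card {z : G // ((t : ℤ) - 1) • z = -g} = _
  rw [Nat.card_congr (E1.trans (E2.trans (E3.trans E4))), Nat.card_pi]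
  exact Finset.prod_congr rfl fun i _ => card_zsmulker_zmod (ℓ i) ((t : ℤ) - 1)
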